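/- arXiv:1510.07755 — 6 statements merged into one kernel-verified Lean document; each statement's English description precedes it below -/
import Mathlib

section
/- Let F be a field of characteristic zero, V an F-vector space, and k a natural number. Then the Koszul differential δ : ⋀^{k+1} V → (⋀^k V) ⊗ V is injective. -/
open TensorProduct

/-- The `n`-th exterior power `⋀^n V` of an `F`-vector space `V` (the degree-`n` part
of the exterior algebra of `V`). -/
def ExtPower (F : Type*) [Field F] (n : ℕ) (V : Type*) [AddCommGroup V] [Module F V] :
    Type _ := ↥(⋀[F]^n V)

noncomputable instance (F : Type*) [Field F] (n : ℕ) (V : Type*) [AddCommGroup V]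
    [Module F V] : AddCommGroup (ExtPower F n V) :=
  inferInstanceAs (AddCommGroup ↥(⋀[F]^n V))

noncomputable instance (F : Type*) [Field F] (n : ℕ) (V : Type*) [AddCommGroup V]
    [Module F V] : Module F (ExtPower F n V) :=
  inferInstanceAs (Module F ↥(⋀[F]^n V))

/-- The wedge product `v₀ ∧ ⋯ ∧ v_{n-1} ∈ ⋀^n V` of an `n`-tuple of vectors of `V`. -/
noncomputable def wedge (F : Type*) [Field F] {V : Type*} [AddCommGroup V] [Module F V]
    (n : ℕ) (v : Fin n → V) : ExtPower F n V :=
  ⟨ExteriorAlgebra.ιMulti F n v, ExteriorAlgebra.ιMulti_range F n (Set.mem_range_self v)⟩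

/-! Composing `δ` with the multiplication map `ω ⊗ v ↦ v ∧ ω` gives `(k + 1) (-1)^k` times the
inclusion `⋀^{k+1} V → ⋀ V`: moving `v_i` back to position `i` costs the sign `(-1)^i`, which
cancels against the `(-1)^{k-i}` of the `i`-th term, so all `k + 1` terms of `δ(v₀ ∧ ⋯ ∧ v_k)`
multiply to the same `(-1)^k v₀ ∧ ⋯ ∧ v_k`. In characteristic zero `k + 1 ≠ 0`. -/
theorem ExteriorAlgebra.ι_mul_ιMulti_removeNth {R M : Type*} [CommRing R] [AddCommGroup M]
    [Module R M] {n : ℕ} (v : Fin (n + 1) → M) (i : Fin (n + 1)) :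
    ι R (v i) * ιMulti R n (i.removeNth v) = (-1 : R) ^ (i : ℕ) • ιMulti R (n + 1) v := by
  have hperm := (ιMulti R (n + 1)).map_perm v i.cycleRange.symm
  rw [← Fin.cons_removeNth_eq_comp_cycleRange_symm, ιMulti_succ_apply] at hperm
  simp only [Fin.cons_zero, Matrix.vecTail, Function.comp_def, Fin.cons_succ] at hperm
  rw [hperm, Equiv.Perm.sign_symm, Fin.sign_cycleRange, Units.smul_def, ← Int.cast_smul_eq_zsmul R]
  push_cast
  rfl

theorem span_range_wedge (F : Type*) [Field F] (V : Type*) [AddCommGroup V] [Module F V]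
    (n : ℕ) : Submodule.span F (Set.range (wedge F n (V := V))) = ⊤ :=
  exteriorPower.ιMulti_span F n V

section Koszul

variable {F : Type*} [Field F] {V : Type*} [AddCommGroup V] [Module F V] {k : ℕ}

variable (F V k) in
noncomputable def wedgeMul : ExtPower F k V ⊗[F] V →ₗ[F] ExteriorAlgebra F V :=
  TensorProduct.lift
    ((LinearMap.mul F _).flip.comp (⋀[F]^k V).subtype |>.compl₂ (ExteriorAlgebra.ι F))

theorem wedgeMul_koszul_wedge (v : Fin (k + 1) → V) :
    wedgeMul F V k (∑ i : Fin (k + 1),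
        (-1 : F) ^ (k - (i : ℕ)) • (wedge F k (fun j => v (i.succAbove j)) ⊗ₜ[F] v i)) =
      ((k + 1 : F) * (-1) ^ k) • ExteriorAlgebra.ιMulti F (k + 1) v := by
  have hterm (i : Fin (k + 1)) :
      wedgeMul F V k ((-1 : F) ^ (k - (i : ℕ)) • (wedge F k (fun j => v (i.succAbove j)) ⊗ₜ v i))
        = (-1 : F) ^ k • ExteriorAlgebra.ιMulti F (k + 1) v := by
    calc _ = (-1 : F) ^ (k - (i : ℕ)) • ((-1 : F) ^ (i : ℕ) • ExteriorAlgebra.ιMulti F (k + 1) v) :=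
          (map_smul _ _ _).trans (congrArg _ (ExteriorAlgebra.ι_mul_ιMulti_removeNth v i))
      _ = _ := by rw [smul_smul, ← pow_add, Nat.sub_add_cancel i.is_le]
  rw [map_sum, Finset.sum_congr rfl fun i _ => hterm i, Finset.sum_const, Finset.card_univ,
    Fintype.card_fin, ← Nat.cast_smul_eq_nsmul F, smul_smul, Nat.cast_succ]

end Koszul

/-- Over a field of characteristic zero, the Koszul differential
`δ : ⋀^{k+1} V → (⋀^k V) ⊗ V` is injective. -/
theorem koszul_differential_injective (F : Type*) [Field F] [CharZero F]
    (V : Type*) [AddCommGroup V] [Module F V] (k : ℕ)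
    (δ : (ExtPower F (k+1) V) →ₗ[F] (ExtPower F k V) ⊗[F] V)
    (hδ : ∀ v : Fin (k+1) → V,
      δ (wedge F (k+1) v) =
        ∑ i : Fin (k+1), ((-1 : F) ^ (k - (i : ℕ))) •
          (wedge F k (fun j => v (i.succAbove j)) ⊗ₜ[F] v i)) :
    Function.Injective δ := by
  have hc : ((k + 1 : F) * (-1) ^ k) ≠ 0 := mul_ne_zero k.cast_add_one_ne_zero (by simp)
  have hcomp : wedgeMul F V k ∘ₗ δ = ((k + 1 : F) * (-1) ^ k) • (⋀[F]^(k + 1) V).subtype := by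
    refine LinearMap.ext_on (span_range_wedge F V (k + 1)) ?_
    rintro _ ⟨v, rfl⟩
    exact (congrArg _ (hδ v)).trans (wedgeMul_koszul_wedge v)
  intro a b hab
  have hcab := congr(wedgeMul F V k $hab)
  rw [← LinearMap.comp_apply, ← LinearMap.comp_apply, hcomp] at hcab
  exact Subtype.val_injective (smul_right_injective _ hc hcab)
end

section
/- Let F be a field of characteristic zero, let j : V' → V be an injective linear map of F-vector spaces, and let k be a natural number. Let δ' : ⋀^{k+1} V' → (⋀^k V') ⊗ V' and δ : ⋀^{k+1} V → (⋀^k V) ⊗ V be the Koszul differentials, and let j₂ = (⋀^k j) ⊗ j : (⋀^k V') ⊗ V' → (⋀^k V) ⊗ V. Then the preimage under j₂ of the range of δ equals the range of δ'. In particular, if α' ∈ (⋀^k V') ⊗ V' satisfies j₂(α') = δ(β) for some β ∈ ⋀^{k+1} V, then there exists β' ∈ ⋀^{k+1} V' with δ'(β') = α'. -/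
open TensorProduct

/-!
Right multiplication `mulι : ⋀^k V ⊗ V → ⋀^(k+1) V`, `ω ⊗ x ↦ ω ∧ x`, is natural in `V` and
satisfies `mulι ∘ δ = (k + 1) • id`, because each of the `k + 1` terms of `δ (v₀ ∧ ⋯ ∧ v_k)`
multiplies back to `v₀ ∧ ⋯ ∧ v_k`. In characteristic zero this retraction lets one pull a
preimage back along `j`: if `j₂ α' = δ β`, then `β' = (k + 1)⁻¹ • mulι α'` satisfies
`⋀^(k+1) j β' = β`, hence `j₂ (δ' β') = δ β = j₂ α'`, and `j₂` is injective because `j` has a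
left inverse.
-/

theorem AlternatingMap.map_snoc_succAbove {R M N : Type*} [CommRing R] [AddCommGroup M]
    [Module R M] [AddCommGroup N] [Module R N] {k : ℕ} (f : M [⋀^Fin (k + 1)]→ₗ[R] N)
    (v : Fin (k + 1) → M) (i : Fin (k + 1)) :
    f (Fin.snoc (v ∘ i.succAbove) (v i)) = (-1 : R) ^ (k - i) • f v := by
  -- `v ∘ τ` moves the entry `v i` to the last slot; `τ` is a `(k - i + 1)`-cycle.
  set τ : Equiv.Perm (Fin (k + 1)) := (Fin.cycleRange i)⁻¹ * finRotate (k + 1)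
  have hτ : v ∘ τ = Fin.snoc (v ∘ i.succAbove) (v i) := by
    funext l
    refine Fin.lastCases ?_ (fun l => ?_) l
    · have : τ (Fin.last k) = i := by
        rw [Equiv.Perm.mul_apply, finRotate_last, Equiv.Perm.inv_eq_iff_eq, Fin.cycleRange_self]
      simp [this]
    · have : τ l.castSucc = i.succAbove l := by
        rw [Equiv.Perm.mul_apply, finRotate_apply, Equiv.Perm.inv_eq_iff_eq,
          Fin.coeSucc_eq_succ, Fin.cycleRange_succAbove]
      simp [this]
  have hsign : Equiv.Perm.sign τ = (-1) ^ (k - i) := by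
    rw [map_mul, map_inv, Fin.sign_cycleRange, sign_finRotate, Nat.add_sub_cancel,
      inv_mul_eq_iff_eq_mul, ← pow_add, Nat.add_sub_cancel' i.is_le]
  rw [← hτ, f.map_perm, hsign, Units.smul_def, ← Int.cast_smul_eq_zsmul R]
  simp

theorem ExteriorAlgebra.ιMulti_snoc {R M : Type*} [CommRing R] [AddCommGroup M] [Module R M]
    (n : ℕ) (v : Fin n → M) (m : M) :
    ιMulti R (n + 1) (Fin.snoc v m) = ιMulti R n v * ι R m := by
  rw [ιMulti_apply, ιMulti_apply, List.ofFn_succ', List.concat_eq_append, List.prod_append]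
  simp

namespace exteriorPower

open ExteriorAlgebra

variable (R : Type*) {M N : Type*} [CommRing R] [AddCommGroup M] [Module R M]
  [AddCommGroup N] [Module R N]

noncomputable def mulι (n : ℕ) : ⋀[R]^n M ⊗[R] M →ₗ[R] ⋀[R]^(n + 1) M :=
  (LinearMap.mul' R (ExteriorAlgebra R M) ∘ₗ TensorProduct.map (⋀[R]^n M).subtype (ι R))
    |>.codRestrict _ fun t => by
      induction t using TensorProduct.induction_on with
      | zero => simp
      | tmul ω m =>
        have hm : ι R m ∈ ⋀[R]^1 M := by simp
        exact SetLike.mul_mem_graded ω.2 hm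
      | add s t hs ht => rw [map_add]; exact add_mem hs ht

variable {R}

@[simp]
theorem coe_mulι_tmul (n : ℕ) (ω : ⋀[R]^n M) (m : M) :
    (mulι R n (ω ⊗ₜ m) : ExteriorAlgebra R M) = ω * ι R m := rfl

theorem mulι_tmul_ιMulti (n : ℕ) (v : Fin n → M) (m : M) :
    mulι R n (ιMulti R n v ⊗ₜ m) = ιMulti R (n + 1) (Fin.snoc v m) := by
  ext
  rw [coe_mulι_tmul, ιMulti_apply_coe, ιMulti_apply_coe, ιMulti_snoc]

theorem mulι_comp_map (n : ℕ) (f : M →ₗ[R] N) :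
    mulι R n ∘ₗ TensorProduct.map (map n f) f = map (n + 1) f ∘ₗ mulι R n := by
  refine TensorProduct.ext (linearMap_ext (N := M →ₗ[R] ⋀[R]^(n + 1) N) ?_)
  ext v m
  simp [mulι_tmul_ιMulti, Fin.comp_snoc]

variable (R) in
def IsKoszulDifferential (k : ℕ) (δ : ⋀[R]^(k + 1) M →ₗ[R] ⋀[R]^k M ⊗[R] M) : Prop :=
  ∀ v : Fin (k + 1) → M,
    δ (ιMulti R (k + 1) v) =
      ∑ i : Fin (k + 1), (-1 : R) ^ (k - i) • (ιMulti R k (v ∘ i.succAbove) ⊗ₜ v i)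

namespace IsKoszulDifferential

variable {k : ℕ} {δ : ⋀[R]^(k + 1) M →ₗ[R] ⋀[R]^k M ⊗[R] M}

theorem mulι_comp (hδ : IsKoszulDifferential R k δ) :
    mulι R k ∘ₗ δ = ((k : R) + 1) • LinearMap.id := by
  refine linearMap_ext (AlternatingMap.ext fun v => ?_)
  have hterm (i : Fin (k + 1)) :
      (-1 : R) ^ (k - i) • mulι R k (ιMulti R k (v ∘ i.succAbove) ⊗ₜ v i) =
        ιMulti R (k + 1) v := by
    rw [mulι_tmul_ιMulti, AlternatingMap.map_snoc_succAbove, smul_smul, ← pow_add, ← two_mul,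
      pow_mul, neg_one_sq, one_pow, one_smul]
  rw [LinearMap.compAlternatingMap_apply, LinearMap.comp_apply, hδ v]
  simp [hterm, add_smul, Nat.cast_smul_eq_nsmul]

theorem comp_map {δ' : ⋀[R]^(k + 1) N →ₗ[R] ⋀[R]^k N ⊗[R] N} (hδ : IsKoszulDifferential R k δ)
    (hδ' : IsKoszulDifferential R k δ') (f : M →ₗ[R] N) :
    δ' ∘ₗ map (k + 1) f = TensorProduct.map (map k f) f ∘ₗ δ := by
  refine linearMap_ext (N := ⋀[R]^k N ⊗[R] N) (AlternatingMap.ext fun v => ?_)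
  simp only [LinearMap.compAlternatingMap_apply, LinearMap.comp_apply, map_apply_ιMulti, hδ v,
    hδ' (f ∘ v)]
  simp [Function.comp_assoc]

end IsKoszulDifferential

end exteriorPower

theorem LinearMap.comap_range_eq_range_of_retraction {R A A' B B' : Type*} [CommSemiring R]
    [AddCommMonoid A] [Module R A] [AddCommMonoid A'] [Module R A'] [AddCommMonoid B] [Module R B]
    [AddCommMonoid B'] [Module R B'] {δ : A →ₗ[R] B} {δ' : A' →ₗ[R] B'} {f : A' →ₗ[R] A}
    {g : B' →ₗ[R] B} {m : B →ₗ[R] A} {m' : B' →ₗ[R] A'} {c : R} (hg : Function.Injective g)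
    (hδ : δ ∘ₗ f = g ∘ₗ δ') (hm : m ∘ₗ g = f ∘ₗ m') (hmδ : m ∘ₗ δ = c • LinearMap.id)
    (hc : IsUnit c) :
    (range δ).comap g = range δ' := by
  obtain ⟨u, rfl⟩ := hc
  apply le_antisymm
  · rintro α' ⟨β, hβ⟩
    have hf : f ((↑u⁻¹ : R) • m' α') = β := by
      rw [map_smul, ← comp_apply, ← hm, comp_apply, ← hβ, ← comp_apply, hmδ, smul_apply,
        id_apply, smul_smul, Units.inv_mul, one_smul]
    exact ⟨_, hg (by rw [← comp_apply, ← hδ, comp_apply, hf, hβ])⟩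
  · rintro _ ⟨γ, rfl⟩
    exact ⟨f γ, by rw [← comp_apply, hδ, comp_apply]⟩

/-- Let `j : V' → V` be an injective linear map, `δ'` and `δ` the Koszul
differentials of `V'` and `V`, and `j₂ = (⋀^k j) ⊗ j`, where `⋀^k j` is the map induced by
`j` on `k`-th exterior powers. Then the preimage under `j₂` of the range of `δ` equals the
range of `δ'`; in particular, if `α'` satisfies `j₂ α' = δ β` for some `β`, then there is a
`β'` with `δ' β' = α'`. -/
theorem koszul_preimage_range (F : Type*) [Field F] [CharZero F]
    (V' V : Type*) [AddCommGroup V'] [Module F V'] [AddCommGroup V] [Module F V]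
    (j : V' →ₗ[F] V) (hj : Function.Injective j) (k : ℕ)
    (δ' : (ExtPower F (k+1) V') →ₗ[F] (ExtPower F k V') ⊗[F] V')
    (hδ' : ∀ v : Fin (k+1) → V',
      δ' (wedge F (k+1) v) =
        ∑ i : Fin (k+1), ((-1 : F) ^ (k - (i : ℕ))) •
          (wedge F k (fun l => v (i.succAbove l)) ⊗ₜ[F] v i))
    (δ : (ExtPower F (k+1) V) →ₗ[F] (ExtPower F k V) ⊗[F] V)
    (hδ : ∀ v : Fin (k+1) → V,
      δ (wedge F (k+1) v) =
        ∑ i : Fin (k+1), ((-1 : F) ^ (k - (i : ℕ))) •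
          (wedge F k (fun l => v (i.succAbove l)) ⊗ₜ[F] v i))
    -- `jk` is the map `⋀^k j : ⋀^k V' → ⋀^k V` induced by `j`
    (jk : (ExtPower F k V') →ₗ[F] ExtPower F k V)
    (hjk : ∀ v : Fin k → V', jk (wedge F k v) = wedge F k (fun l => j (v l))) :
    Submodule.comap (TensorProduct.map jk j) (LinearMap.range δ) = LinearMap.range δ' ∧
    ∀ (α' : (ExtPower F k V') ⊗[F] V') (β : ExtPower F (k+1) V),
      TensorProduct.map jk j α' = δ β → ∃ β' : ExtPower F (k+1) V', δ' β' = α' := by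
  -- `ExtPower F n V` and `wedge F n` unfold to `⋀[F]^n V` and `exteriorPower.ιMulti F n`, so
  -- `hδ`, `hδ'` are literally `IsKoszulDifferential` hypotheses.
  obtain rfl : jk = exteriorPower.map k j :=
    exteriorPower.linearMap_ext <| AlternatingMap.ext fun v =>
      (hjk v).trans (exteriorPower.map_apply_ιMulti j v).symm
  have hrange : (LinearMap.range δ).comap (TensorProduct.map (exteriorPower.map k j) j) =
      LinearMap.range δ' :=
    LinearMap.comap_range_eq_range_of_retraction
      (TensorProduct.map_injective_of_flat_flat _ _ (exteriorPower.map_injective_field hj) hj)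
      (exteriorPower.IsKoszulDifferential.comp_map hδ' hδ j) (exteriorPower.mulι_comp_map k j)
      (exteriorPower.IsKoszulDifferential.mulι_comp hδ) (Nat.cast_add_one_ne_zero k).isUnit
  exact ⟨hrange, fun α' β hβ => hrange.le ⟨β, hβ.symm⟩⟩
end

section
/- Let F be a field of characteristic zero and k ≥ 1 a natural number. Let V' ⊆ V be an inclusion of F-vector spaces, ι : W' → W an injective linear map of F-vector spaces, and μ : V × V → W, μ' : V' × V' → W' symmetric bilinear maps satisfying ι(μ'(u, v)) = μ(u, v) for all u, v ∈ V'. Let δ₁ : ⋀^{k+1} V → (⋀^k V) ⊗ V and δ₁' : ⋀^{k+1} V' → (⋀^k V') ⊗ V' be the Koszul differentials, and let δ₂ : (⋀^k V) ⊗ V → (⋀^{k−1} V) ⊗ W and δ₂' : (⋀^k V') ⊗ V' → (⋀^{k−1} V') ⊗ W' be the linear maps determined by δ₂((v₁ ∧ ⋯ ∧ v_k) ⊗ u) = Σ_{i=1}^{k} (−1)^{k−i} (v₁ ∧ ⋯ ∧ v̂_i ∧ ⋯ ∧ v_k) ⊗ μ(v_i, u) (and similarly for δ₂' using μ'). Define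 the Koszul cohomology groups K' = ker δ₂' / range δ₁' and K = ker δ₂ / range δ₁. Then the inclusion V' ⊆ V and the map ι induce a well-defined linear map K' → K, and this map is injective. -/
/-!
Over a field the inclusion `j : V' → V` has a linear retraction `p`. Then `⋀p ⊗ p` is a
retraction of `⋀j ⊗ j` which, like `⋀j ⊗ j`, commutes with the first Koszul differentials.
So if the image of a cocycle `x` is a coboundary `δ₁ y`, then `x = (⋀p ⊗ p)(δ₁ y) = δ₁' (⋀p y)`
is a coboundary as well.
-/

open TensorProduct

section

variable {R : Type*} [Ring R] {A B C A' B' C' : Type*}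
  [AddCommGroup A] [Module R A] [AddCommGroup B] [Module R B] [AddCommGroup C] [Module R C]
  [AddCommGroup A'] [Module R A'] [AddCommGroup B'] [Module R B'] [AddCommGroup C'] [Module R C']

abbrev KerModRange (d₁ : A →ₗ[R] B) (d₂ : B →ₗ[R] C) : Type _ :=
  ↥(LinearMap.ker d₂) ⧸ (LinearMap.range d₁).comap (LinearMap.ker d₂).subtype

variable {d₁ : A →ₗ[R] B} {d₂ : B →ₗ[R] C} {d₁' : A' →ₗ[R] B'} {d₂' : B' →ₗ[R] C'}
  {f : B' →ₗ[R] B}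

lemma map_mem_ker_of_comp_eq {g : C' →ₗ[R] C} (hg : d₂ ∘ₗ f = g ∘ₗ d₂') {x : B'}
    (hx : x ∈ LinearMap.ker d₂') : f x ∈ LinearMap.ker d₂ := by
  rw [LinearMap.mem_ker] at hx ⊢
  rw [← LinearMap.comp_apply, hg, LinearMap.comp_apply, hx, map_zero]

namespace KerModRange

noncomputable def map {g : C' →ₗ[R] C} (hg : d₂ ∘ₗ f = g ∘ₗ d₂') {h : A' →ₗ[R] A}
    (hh : f ∘ₗ d₁' = d₁ ∘ₗ h) : KerModRange d₁' d₂' →ₗ[R] KerModRange d₁ d₂ :=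
  Submodule.mapQ _ _ (f.restrict fun _ => map_mem_ker_of_comp_eq hg) <| by
    rintro x ⟨y, hy⟩
    exact ⟨h y, by rw [← LinearMap.comp_apply, ← hh, LinearMap.comp_apply, hy]; rfl⟩

lemma map_mk {g : C' →ₗ[R] C} (hg : d₂ ∘ₗ f = g ∘ₗ d₂') {h : A' →ₗ[R] A}
    (hh : f ∘ₗ d₁' = d₁ ∘ₗ h) (x : LinearMap.ker d₂') (hx : f x ∈ LinearMap.ker d₂) :
    map hg hh (Submodule.Quotient.mk x) = Submodule.Quotient.mk ⟨f x, hx⟩ :=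
  rfl

lemma map_injective {g : C' →ₗ[R] C} (hg : d₂ ∘ₗ f = g ∘ₗ d₂') {h : A' →ₗ[R] A}
    (hh : f ∘ₗ d₁' = d₁ ∘ₗ h) {r : B →ₗ[R] B'} (hr : r ∘ₗ f = LinearMap.id)
    {s : A →ₗ[R] A'} (hs : r ∘ₗ d₁ = d₁' ∘ₗ s) : Function.Injective (map hg hh) := by
  rw [← LinearMap.ker_eq_bot, Submodule.eq_bot_iff]
  rintro a ha
  obtain ⟨x, rfl⟩ := Submodule.Quotient.mk_surjective _ a
  rw [LinearMap.mem_ker, map_mk hg hh x (map_mem_ker_of_comp_eq hg x.2),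
    Submodule.Quotient.mk_eq_zero] at ha
  obtain ⟨y, hy⟩ := ha
  rw [Submodule.Quotient.mk_eq_zero]
  refine ⟨s y, ?_⟩
  rw [← LinearMap.comp_apply, ← hs, LinearMap.comp_apply, hy]
  exact LinearMap.congr_fun hr x

end KerModRange

end

namespace ExtPower

variable {F : Type*} [Field F] {U V W : Type*} [AddCommGroup U] [Module F U]
  [AddCommGroup V] [Module F V] [AddCommGroup W] [Module F W]

@[ext]
lemma hom_ext {n : ℕ} {f g : ExtPower F n V →ₗ[F] W}
    (h : ∀ v : Fin n → V, f (wedge F n v) = g (wedge F n v)) : f = g :=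
  exteriorPower.linearMap_ext (AlternatingMap.ext h)

noncomputable def map (n : ℕ) (f : U →ₗ[F] V) : ExtPower F n U →ₗ[F] ExtPower F n V :=
  exteriorPower.map n f

@[simp]
lemma map_wedge (n : ℕ) (f : U →ₗ[F] V) (v : Fin n → U) :
    map n f (wedge F n v) = wedge F n (fun l => f (v l)) :=
  exteriorPower.map_apply_ιMulti f v

lemma map_comp_map (n : ℕ) (f : U →ₗ[F] V) (g : V →ₗ[F] U) :
    map n g ∘ₗ map n f = map n (g ∘ₗ f) :=
  (exteriorPower.map_comp f g).symm

lemma map_id (n : ℕ) : map n (LinearMap.id : V →ₗ[F] V) = LinearMap.id :=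
  exteriorPower.map_id

end ExtPower

section Koszul

variable {F : Type*} [Field F] {U V W W' : Type*} [AddCommGroup U] [Module F U]
  [AddCommGroup V] [Module F V] [AddCommGroup W] [Module F W]
  [AddCommGroup W'] [Module F W']

def IsKoszulD₁ (n : ℕ) (δ : ExtPower F (n+2) V →ₗ[F] ExtPower F (n+1) V ⊗[F] V) : Prop :=
  ∀ v : Fin (n+2) → V, δ (wedge F (n+2) v) =
    ∑ i : Fin (n+2), ((-1 : F) ^ (n + 1 - (i : ℕ))) •
      (wedge F (n+1) (fun l => v (i.succAbove l)) ⊗ₜ[F] v i)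

def IsKoszulD₂ (n : ℕ) (μ : V →ₗ[F] V →ₗ[F] W)
    (δ : ExtPower F (n+1) V ⊗[F] V →ₗ[F] ExtPower F n V ⊗[F] W) : Prop :=
  ∀ (v : Fin (n+1) → V) (u : V), δ (wedge F (n+1) v ⊗ₜ[F] u) =
    ∑ i : Fin (n+1), ((-1 : F) ^ (n - (i : ℕ))) •
      (wedge F n (fun l => v (i.succAbove l)) ⊗ₜ[F] (μ (v i) u))

lemma IsKoszulD₁.tensorMap_comp {n : ℕ}
    {δ : ExtPower F (n+2) V →ₗ[F] ExtPower F (n+1) V ⊗[F] V}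
    {δ' : ExtPower F (n+2) U →ₗ[F] ExtPower F (n+1) U ⊗[F] U}
    (hδ : IsKoszulD₁ n δ) (hδ' : IsKoszulD₁ n δ') (f : U →ₗ[F] V) :
    TensorProduct.map (ExtPower.map (n+1) f) f ∘ₗ δ' = δ ∘ₗ ExtPower.map (n+2) f := by
  ext v
  rw [LinearMap.comp_apply, LinearMap.comp_apply, hδ' v, ExtPower.map_wedge, hδ]
  simp only [map_sum, map_smul, TensorProduct.map_tmul, ExtPower.map_wedge]

lemma IsKoszulD₂.comp_tensorMap {n : ℕ} {μ : V →ₗ[F] V →ₗ[F] W} {μ' : U →ₗ[F] U →ₗ[F] W'}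
    {δ : ExtPower F (n+1) V ⊗[F] V →ₗ[F] ExtPower F n V ⊗[F] W}
    {δ' : ExtPower F (n+1) U ⊗[F] U →ₗ[F] ExtPower F n U ⊗[F] W'}
    (hδ : IsKoszulD₂ n μ δ) (hδ' : IsKoszulD₂ n μ' δ') {f : U →ₗ[F] V} {ι : W' →ₗ[F] W}
    (hcompat : ∀ u v : U, ι (μ' u v) = μ (f u) (f v)) :
    δ ∘ₗ TensorProduct.map (ExtPower.map (n+1) f) f =
      TensorProduct.map (ExtPower.map n f) ι ∘ₗ δ' := by
  refine TensorProduct.ext (ExtPower.hom_ext fun v => LinearMap.ext fun u => ?_)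
  simp only [LinearMap.compr₂ₛₗ_apply, TensorProduct.mk_apply, LinearMap.comp_apply,
    TensorProduct.map_tmul, ExtPower.map_wedge]
  rw [hδ, hδ' v u]
  simp only [map_sum, map_smul, TensorProduct.map_tmul, ExtPower.map_wedge, hcompat]

end Koszul

theorem koszul_cohomology_map_injective_general (F : Type*) [Field F]
    (V' V W' W : Type*) [AddCommGroup V'] [Module F V'] [AddCommGroup V] [Module F V]
    [AddCommGroup W'] [Module F W'] [AddCommGroup W] [Module F W]
    (j : V' →ₗ[F] V) (hj : Function.Injective j)
    (ι : W' →ₗ[F] W)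
    (μ : V →ₗ[F] V →ₗ[F] W)
    (μ' : V' →ₗ[F] V' →ₗ[F] W')
    (hcompat : ∀ u v : V', ι (μ' u v) = μ (j u) (j v))
    (n : ℕ)
    -- Koszul differentials for `V` (with `k = n + 1`)
    (δ₁ : (ExtPower F (n+2) V) →ₗ[F] (ExtPower F (n+1) V) ⊗[F] V)
    (hδ₁ : ∀ v : Fin (n+2) → V,
      δ₁ (wedge F (n+2) v) =
        ∑ i : Fin (n+2), ((-1 : F) ^ (n + 1 - (i : ℕ))) •
          (wedge F (n+1) (fun l => v (i.succAbove l)) ⊗ₜ[F] v i))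
    (δ₂ : ((ExtPower F (n+1) V) ⊗[F] V) →ₗ[F] (ExtPower F n V) ⊗[F] W)
    (hδ₂ : ∀ (v : Fin (n+1) → V) (u : V),
      δ₂ (wedge F (n+1) v ⊗ₜ[F] u) =
        ∑ i : Fin (n+1), ((-1 : F) ^ (n - (i : ℕ))) •
          (wedge F n (fun l => v (i.succAbove l)) ⊗ₜ[F] (μ (v i) u)))
    -- Koszul differentials for `V'` (with `k = n + 1`)
    (δ₁' : (ExtPower F (n+2) V') →ₗ[F] (ExtPower F (n+1) V') ⊗[F] V')
    (hδ₁' : ∀ v : Fin (n+2) → V',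
      δ₁' (wedge F (n+2) v) =
        ∑ i : Fin (n+2), ((-1 : F) ^ (n + 1 - (i : ℕ))) •
          (wedge F (n+1) (fun l => v (i.succAbove l)) ⊗ₜ[F] v i))
    (δ₂' : ((ExtPower F (n+1) V') ⊗[F] V') →ₗ[F] (ExtPower F n V') ⊗[F] W')
    (hδ₂' : ∀ (v : Fin (n+1) → V') (u : V'),
      δ₂' (wedge F (n+1) v ⊗ₜ[F] u) =
        ∑ i : Fin (n+1), ((-1 : F) ^ (n - (i : ℕ))) •
          (wedge F n (fun l => v (i.succAbove l)) ⊗ₜ[F] (μ' (v i) u)))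
    -- the map `⋀^{n+1} V' → ⋀^{n+1} V` induced by `j`
    (jk : (ExtPower F (n+1) V') →ₗ[F] ExtPower F (n+1) V)
    (hjk : ∀ v : Fin (n+1) → V',
      jk (wedge F (n+1) v) = wedge F (n+1) (fun l => j (v l))) :
    (∀ x ∈ LinearMap.ker δ₂',
        TensorProduct.map jk j x ∈ LinearMap.ker δ₂) ∧
    ∃ φ : (↥(LinearMap.ker δ₂') ⧸
            Submodule.comap (LinearMap.ker δ₂').subtype (LinearMap.range δ₁')) →ₗ[F]
          (↥(LinearMap.ker δ₂) ⧸
            Submodule.comap (LinearMap.ker δ₂).subtype (LinearMap.range δ₁)),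
      (∀ (x : LinearMap.ker δ₂')
          (hx : TensorProduct.map jk j (x : (ExtPower F (n+1) V') ⊗[F] V')
                  ∈ LinearMap.ker δ₂),
        φ (Submodule.Quotient.mk x) =
          Submodule.Quotient.mk
            ⟨TensorProduct.map jk j (x : (ExtPower F (n+1) V') ⊗[F] V'), hx⟩) ∧
      Function.Injective φ := by
  obtain ⟨p, hp⟩ := j.exists_leftInverse_of_injective (LinearMap.ker_eq_bot.mpr hj)
  obtain rfl : jk = ExtPower.map (n+1) j :=
    ExtPower.hom_ext fun v => by rw [hjk, ExtPower.map_wedge]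
  have hd₂ := IsKoszulD₂.comp_tensorMap hδ₂ hδ₂' hcompat
  have hd₁ := IsKoszulD₁.tensorMap_comp hδ₁ hδ₁' j
  have hd₁p := IsKoszulD₁.tensorMap_comp hδ₁' hδ₁ p
  have hret : TensorProduct.map (ExtPower.map (n+1) p) p ∘ₗ
      TensorProduct.map (ExtPower.map (n+1) j) j = LinearMap.id := by
    rw [← TensorProduct.map_comp, ExtPower.map_comp_map, hp, ExtPower.map_id,
      TensorProduct.map_id]
  exact ⟨fun _ => map_mem_ker_of_comp_eq hd₂, KerModRange.map hd₂ hd₁,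
    KerModRange.map_mk hd₂ hd₁, KerModRange.map_injective hd₂ hd₁ hret hd₁p⟩

/-- Let `j : V' → V` be an inclusion of `F`-vector spaces (`char F = 0`),
`ι : W' → W` an injective linear map, and `μ, μ'` compatible symmetric bilinear maps.
With `k = n + 1 ≥ 1`, let `δ₁, δ₂` (resp. `δ₁', δ₂'`) be the Koszul differentials for
`(V, μ)` (resp. `(V', μ')`), and let `K = ker δ₂ / range δ₁`, `K' = ker δ₂' / range δ₁'`
be the Koszul cohomology groups.  Then `j₂ = (⋀^k j) ⊗ j` carries `ker δ₂'` into `ker δ₂`,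
inducing a well-defined linear map `K' → K`, and this map is injective. -/
theorem koszul_cohomology_map_injective (F : Type*) [Field F] [CharZero F]
    (V' V W' W : Type*) [AddCommGroup V'] [Module F V'] [AddCommGroup V] [Module F V]
    [AddCommGroup W'] [Module F W'] [AddCommGroup W] [Module F W]
    (j : V' →ₗ[F] V) (hj : Function.Injective j)
    (ι : W' →ₗ[F] W) (hι : Function.Injective ι)
    (μ : V →ₗ[F] V →ₗ[F] W) (hμ : ∀ u v : V, μ u v = μ v u)
    (μ' : V' →ₗ[F] V' →ₗ[F] W') (hμ' : ∀ u v : V', μ' u v = μ' v u)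
    (hcompat : ∀ u v : V', ι (μ' u v) = μ (j u) (j v))
    (n : ℕ)
    -- Koszul differentials for `V` (with `k = n + 1`)
    (δ₁ : (ExtPower F (n+2) V) →ₗ[F] (ExtPower F (n+1) V) ⊗[F] V)
    (hδ₁ : ∀ v : Fin (n+2) → V,
      δ₁ (wedge F (n+2) v) =
        ∑ i : Fin (n+2), ((-1 : F) ^ (n + 1 - (i : ℕ))) •
          (wedge F (n+1) (fun l => v (i.succAbove l)) ⊗ₜ[F] v i))
    (δ₂ : ((ExtPower F (n+1) V) ⊗[F] V) →ₗ[F] (ExtPower F n V) ⊗[F] W)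
    (hδ₂ : ∀ (v : Fin (n+1) → V) (u : V),
      δ₂ (wedge F (n+1) v ⊗ₜ[F] u) =
        ∑ i : Fin (n+1), ((-1 : F) ^ (n - (i : ℕ))) •
          (wedge F n (fun l => v (i.succAbove l)) ⊗ₜ[F] (μ (v i) u)))
    -- Koszul differentials for `V'` (with `k = n + 1`)
    (δ₁' : (ExtPower F (n+2) V') →ₗ[F] (ExtPower F (n+1) V') ⊗[F] V')
    (hδ₁' : ∀ v : Fin (n+2) → V',
      δ₁' (wedge F (n+2) v) =
        ∑ i : Fin (n+2), ((-1 : F) ^ (n + 1 - (i : ℕ))) •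
          (wedge F (n+1) (fun l => v (i.succAbove l)) ⊗ₜ[F] v i))
    (δ₂' : ((ExtPower F (n+1) V') ⊗[F] V') →ₗ[F] (ExtPower F n V') ⊗[F] W')
    (hδ₂' : ∀ (v : Fin (n+1) → V') (u : V'),
      δ₂' (wedge F (n+1) v ⊗ₜ[F] u) =
        ∑ i : Fin (n+1), ((-1 : F) ^ (n - (i : ℕ))) •
          (wedge F n (fun l => v (i.succAbove l)) ⊗ₜ[F] (μ' (v i) u)))
    -- the map `⋀^{n+1} V' → ⋀^{n+1} V` induced by `j`
    (jk : (ExtPower F (n+1) V') →ₗ[F] ExtPower F (n+1) V)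
    (hjk : ∀ v : Fin (n+1) → V',
      jk (wedge F (n+1) v) = wedge F (n+1) (fun l => j (v l))) :
    (∀ x ∈ LinearMap.ker δ₂',
        TensorProduct.map jk j x ∈ LinearMap.ker δ₂) ∧
    ∃ φ : (↥(LinearMap.ker δ₂') ⧸
            Submodule.comap (LinearMap.ker δ₂').subtype (LinearMap.range δ₁')) →ₗ[F]
          (↥(LinearMap.ker δ₂) ⧸
            Submodule.comap (LinearMap.ker δ₂).subtype (LinearMap.range δ₁)),
      (∀ (x : LinearMap.ker δ₂')
          (hx : TensorProduct.map jk j (x : (ExtPower F (n+1) V') ⊗[F] V')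
                  ∈ LinearMap.ker δ₂),
        φ (Submodule.Quotient.mk x) =
          Submodule.Quotient.mk
            ⟨TensorProduct.map jk j (x : (ExtPower F (n+1) V') ⊗[F] V'), hx⟩) ∧
      Function.Injective φ :=
  koszul_cohomology_map_injective_general F V' V W' W j hj ι μ μ' hcompat n δ₁ hδ₁ δ₂ hδ₂ δ₁' hδ₁'
    δ₂' hδ₂' jk hjk
end

section
/- For every natural number k ≥ 1, the identity (Σ_{i=0}^{k−1} (−1)^i · C(2k+1, k−1−i) · (2i+3) · 2k) · (k−1)! · (k+1)! = 2 · (2k+1)! holds in the integers, where C(n, r) denotes the binomial coefficient. -/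
open Finset

private lemma id_choose (N m : ℕ) :
    ((m:ℤ)+1) * (N.choose (m+1) : ℤ) = ((N:ℤ) - m) * (N.choose m : ℤ) := by
  rcases le_or_gt m N with h | h
  · have h2 := Nat.choose_succ_right_eq N m
    zify [h] at h2
    linarith
  · rw [Nat.choose_eq_zero_of_lt h, Nat.choose_eq_zero_of_lt (by omega)]
    push_cast
    ring

private lemma keyB (N m : ℕ) :
    ((N:ℤ)+2) * ((N.choose (m+1) : ℤ) - (if m = 0 then 0 else (N.choose (m-1) : ℤ))) =
    ((N:ℤ) - 2*m) * ((N+2).choose (m+1) : ℤ) := by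
  cases m with
  | zero =>
    simp [Nat.choose_one_right]
    ring
  | succ j =>
    simp only [Nat.succ_ne_zero, if_neg, Nat.succ_sub_one, Nat.add_sub_cancel]
    have hP : (((N+2).choose (j+2) : ℤ)) =
        (N.choose (j+2) : ℤ) + 2*(N.choose (j+1):ℤ) + (N.choose j : ℤ) := by
      show (((N+1)+1).choose (j+1+1) : ℤ) = _
      rw [Nat.choose_succ_succ (N+1) (j+1), Nat.choose_succ_succ N j,
        Nat.choose_succ_succ N (j+1)]
      push_cast
      ring
    have h1 := id_choose N (j+1)
    have h2 := id_choose N j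
    push_cast at h1 h2 ⊢
    linear_combination 2*h1 + 2*h2 - ((N:ℤ)-2*(j:ℤ)-2)*hP

private lemma sumL (N : ℕ) (m : ℕ) :
    ∑ i ∈ range (m+1), (-1:ℤ)^i * ((N+2).choose i : ℤ) * ((N:ℤ) + 2 - 2*i) =
    (-1:ℤ)^m * ((N:ℤ)+2) *
      ((N.choose m : ℤ) - (if m = 0 then 0 else (N.choose (m-1) : ℤ))) := by
  induction m with
  | zero => simp
  | succ m ih =>
    rw [Finset.sum_range_succ, ih]
    have hB := keyB N m
    simp only [Nat.succ_ne_zero, if_neg, Nat.succ_sub_one, Nat.add_sub_cancel]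
    push_cast
    linear_combination ((-1:ℤ)^m) * hB

/-- For every natural number `k ≥ 1`, the identity
`(Σ_{i=0}^{k−1} (−1)^i · C(2k+1, k−1−i) · (2i+3) · 2k) · (k−1)! · (k+1)! = 2·(2k+1)!`
holds in the integers.  This computes the rank of the bundle `𝓕 = ker δ₃` in the Koszul
complex over the stack of curves of genus `g = 2k+1`. -/
theorem rank_F_formula (k : ℕ) (hk : 1 ≤ k) :
    (∑ i ∈ Finset.range k,
        (-1 : ℤ) ^ i * Nat.choose (2 * k + 1) (k - 1 - i) * (2 * i + 3) * (2 * k)) *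
      Nat.factorial (k - 1) * Nat.factorial (k + 1) =
    2 * Nat.factorial (2 * k + 1) := by
  obtain ⟨j, rfl⟩ : ∃ j, k = j + 1 := ⟨k - 1, by omega⟩
  have h1 : (∑ i ∈ Finset.range (j+1),
        (-1 : ℤ) ^ i * Nat.choose (2 * (j+1) + 1) ((j+1) - 1 - i) * (2 * i + 3) * (2 * ((j+1 : ℕ) : ℤ))) =
      (-1:ℤ)^j * (2*(j:ℤ)+2) *
        ∑ i ∈ range (j+1), (-1:ℤ)^i * (((2*j+1)+2).choose i : ℤ) * (((2*j+1 : ℕ) : ℤ) + 2 - 2*i) := by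
    rw [Finset.mul_sum, ← Finset.sum_range_reflect]
    refine Finset.sum_congr rfl ?_
    intro i hi
    simp only [Finset.mem_range] at hi
    have hij : i ≤ j := by omega
    simp only [Nat.add_sub_cancel]
    rw [show j - (j - i) = i from by omega, show 2*(j+1)+1 = (2*j+1)+2 from by ring]
    have h3 : (-1:ℤ)^i * (-1)^i = 1 := by
      rw [← pow_add, ← two_mul, pow_mul]; norm_num
    have h2 : (-1:ℤ)^(j-i) * (-1)^i = (-1)^j := by
      rw [← pow_add]; congr 1; omega
    have hs : (-1:ℤ)^(j-i) = (-1)^j * (-1)^i := by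
      rw [← h2, mul_assoc, h3, mul_one]
    rw [hs, Nat.cast_sub hij]
    push_cast
    ring
  have hmain : (2*(j:ℤ)+2) * (((2*j+1 : ℕ) : ℤ) + 2) *
      ((((2*j+1).choose j : ℕ) : ℤ) - (if j = 0 then 0 else (((2*j+1).choose (j-1) : ℕ) : ℤ))) *
      ((Nat.factorial (j+1-1) : ℕ) : ℤ) * ((Nat.factorial (j+1+1) : ℕ) : ℤ) =
      2 * ((Nat.factorial (2*(j+1)+1) : ℕ) : ℤ) := by
    cases j with
    | zero => norm_num [Nat.factorial]
    | succ l =>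
      simp only [Nat.succ_ne_zero, if_neg, Nat.succ_sub_one, Nat.add_sub_cancel]
      have hA1 : ((2*(l+1)+1).choose (l+1)) * Nat.factorial (l+1) * Nat.factorial (l+2) =
          Nat.factorial (2*(l+1)+1) := by
        have := Nat.choose_mul_factorial_mul_factorial (show l+1 ≤ 2*(l+1)+1 by omega)
        rwa [show 2*(l+1)+1-(l+1) = l+2 from by omega] at this
      have hA2 : ((2*(l+1)+1).choose l) * Nat.factorial l * Nat.factorial (l+3) =
          Nat.factorial (2*(l+1)+1) := by
        have := Nat.choose_mul_factorial_mul_factorial (show l ≤ 2*(l+1)+1 by omega)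
        rwa [show 2*(l+1)+1-l = l+3 from by omega] at this
      have hA1' : ((((2*(l+1)+1).choose (l+1) : ℕ)) : ℤ) * (Nat.factorial (l+1) : ℤ) *
          (Nat.factorial (l+2) : ℤ) = (Nat.factorial (2*(l+1)+1) : ℤ) := by exact_mod_cast hA1
      have hA2' : ((((2*(l+1)+1).choose l : ℕ)) : ℤ) * (Nat.factorial l : ℤ) *
          (Nat.factorial (l+3) : ℤ) = (Nat.factorial (2*(l+1)+1) : ℤ) := by exact_mod_cast hA2
      have hf1' : (Nat.factorial (l+1) : ℤ) = ((l:ℤ)+1) * (Nat.factorial l : ℤ) := by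
        rw [Nat.factorial_succ]; push_cast; ring
      have hf2' : (Nat.factorial (l+3) : ℤ) = ((l:ℤ)+3) * (Nat.factorial (l+2) : ℤ) := by
        rw [show l+3 = (l+2)+1 from rfl, Nat.factorial_succ]; push_cast; ring
      have hf5' : (Nat.factorial (2*(l+1+1)+1) : ℤ) =
          (2*(l:ℤ)+5) * ((2*(l:ℤ)+4) * (Nat.factorial (2*(l+1)+1) : ℤ)) := by
        rw [show 2*(l+1+1)+1 = (2*(l+1)+1)+1+1 from by ring, Nat.factorial_succ,
          Nat.factorial_succ]
        push_cast; ring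
      push_cast
      set Ca : ℤ := (((2*(l+1)+1).choose (l+1) : ℕ) : ℤ) with hCa
      set Cb : ℤ := (((2*(l+1)+1).choose l : ℕ) : ℤ) with hCb
      push_cast at hA1' hA2' hf1' hf2' hf5' ⊢
      linear_combination ((2*(l:ℤ)+4)*(2*l+5)*(l+3))*hA1'
        - ((2*(l:ℤ)+4)*(2*l+5)*(l+1))*hA2'
        + ((2*(l:ℤ)+4)*(2*l+5)*Ca*(Nat.factorial (l+1) : ℤ))*hf2'
        - ((2*(l:ℤ)+4)*(2*l+5)*Cb*(Nat.factorial (l+3) : ℤ))*hf1'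
        - 2*hf5'
  rw [h1, sumL (2*j+1) j]
  rcases Nat.even_or_odd j with hp | hp
  · rw [hp.neg_one_pow]
    linear_combination hmain
  · rw [hp.neg_one_pow]
    linear_combination hmain
end

section
/- Let F be a field of characteristic zero, let S = F[s, ε] be the polynomial ring in two variables, let J = (ε²), and let R = S/J. Every F-linear derivation D of S maps J² into J and hence induces an R-linear map φ_D : J/J² → R, (j mod J²) ↦ (D(j) mod J). The cokernel of the resulting R-linear map Der_F(S, S) ⊗_S R → Hom_R(J/J², R) is isomorphic as an R-module to R/(ε̄), where ε̄ is the class of ε in R; in particular this cokernel is isomorphic as an F-vector space (indeed as a module over F[s]) to the polynomial ring F[s]. -/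
open MvPolynomial

section Aux
variable (F : Type*) [Field F] [CharZero F]

noncomputable def ribbonE : MvPolynomial (Fin 2) F ≃ₐ[F] Polynomial (Polynomial F) :=
  (renameEquiv F (Equiv.swap 0 1)).trans ((finSuccEquiv F 1).trans
    (Polynomial.mapAlgEquiv ((finSuccEquiv F 0).trans
      (Polynomial.mapAlgEquiv (isEmptyAlgEquiv F (Fin 0))))))

omit [CharZero F] in
lemma ribbonE_X1 : ribbonE F (X 1) = Polynomial.X := by
  simp [ribbonE, finSuccEquiv_X_zero]

noncomputable def ribbonQuotX : (MvPolynomial (Fin 2) F ⧸ Ideal.span {(X 1 : MvPolynomial (Fin 2) F)})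
    ≃ₐ[F] Polynomial F := by
  refine (Ideal.quotientEquivAlg (Ideal.span {(X 1 : MvPolynomial (Fin 2) F)})
    (Ideal.span {(Polynomial.X : Polynomial (Polynomial F))}) (ribbonE F) ?_).trans
    (AlgEquiv.restrictScalars F
      ((Ideal.quotientEquivAlgOfEq (Polynomial F)
        (show Ideal.span {(Polynomial.X : Polynomial (Polynomial F))}
            = Ideal.span {Polynomial.X - Polynomial.C 0} by simp)).trans
        (Polynomial.quotientSpanXSubCAlgEquiv (0 : Polynomial F))))
  rw [Ideal.map_span, Set.image_singleton]
  norm_num [ribbonE_X1]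

noncomputable def ribbonQuot :
    ((MvPolynomial (Fin 2) F ⧸ Ideal.span {(X 1 : MvPolynomial (Fin 2) F) ^ 2}) ⧸
      Ideal.span {Ideal.Quotient.mk (Ideal.span {(X 1 : MvPolynomial (Fin 2) F) ^ 2}) (X 1)})
    ≃ₐ[F] Polynomial F := by
  set J : Ideal (MvPolynomial (Fin 2) F) := Ideal.span {(X 1 : MvPolynomial (Fin 2) F) ^ 2}
  set I : Ideal (MvPolynomial (Fin 2) F) := Ideal.span {(X 1 : MvPolynomial (Fin 2) F)}
  have h1 : Ideal.span {Ideal.Quotient.mk J (X 1)} = I.map (Ideal.Quotient.mkₐ F J) := by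
    rw [Ideal.map_span, Set.image_singleton]; rfl
  have h2 : J ⊔ I = I := by
    refine sup_eq_right.mpr ?_
    rw [Ideal.span_le, Set.singleton_subset_iff]
    exact Ideal.mem_span_singleton.mpr (dvd_pow_self _ two_ne_zero)
  exact ((Ideal.quotientEquivAlgOfEq F h1).trans
    ((DoubleQuot.quotQuotEquivQuotSupₐ F J I).trans
      (Ideal.quotientEquivAlgOfEq F h2))).trans (ribbonQuotX F)
end Aux

set_option synthInstance.maxHeartbeats 10000000 in
set_option maxHeartbeats 20000000 in
theorem cokernel_T1_ribbon_aux (F : Type*) [Field F] [CharZero F]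
    (J : Ideal (MvPolynomial (Fin 2) F))
    (hJ : J = Ideal.span {MvPolynomial.X 1 ^ 2})
    (Φ : Derivation F (MvPolynomial (Fin 2) F) (MvPolynomial (Fin 2) F) →
      (J.Cotangent →ₗ[MvPolynomial (Fin 2) F ⧸ J] MvPolynomial (Fin 2) F ⧸ J))
    (hΦ : ∀ (D : Derivation F (MvPolynomial (Fin 2) F) (MvPolynomial (Fin 2) F)) (x : J),
      Φ D (J.toCotangent x) = Ideal.Quotient.mk J (D x)) :
    (∀ (D : Derivation F (MvPolynomial (Fin 2) F) (MvPolynomial (Fin 2) F)),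
        ∀ x ∈ J ^ 2, D x ∈ J) ∧
    Nonempty
      (((J.Cotangent →ₗ[MvPolynomial (Fin 2) F ⧸ J] MvPolynomial (Fin 2) F ⧸ J) ⧸
          Submodule.span (MvPolynomial (Fin 2) F ⧸ J) (Set.range Φ)) ≃ₗ[MvPolynomial (Fin 2) F ⧸ J]
        ((MvPolynomial (Fin 2) F ⧸ J) ⧸
          Ideal.span {Ideal.Quotient.mk J (MvPolynomial.X 1)})) ∧
    Nonempty
      (((J.Cotangent →ₗ[MvPolynomial (Fin 2) F ⧸ J] MvPolynomial (Fin 2) F ⧸ J) ⧸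
          Submodule.span (MvPolynomial (Fin 2) F ⧸ J) (Set.range Φ)) ≃ₗ[F] Polynomial F) := by
  set S := MvPolynomial (Fin 2) F with hS
  set R := S ⧸ J with hR
  have hX1 : (X 1 : S) ≠ 0 := X_ne_zero 1
  -- part 1
  have part1 : ∀ (D : Derivation F S S), ∀ x ∈ J ^ 2, D x ∈ J := by
    intro D x hx
    rw [hJ, Ideal.span_singleton_pow, Ideal.mem_span_singleton] at hx
    obtain ⟨c, rfl⟩ := hx
    rw [hJ, Ideal.mem_span_singleton]
    have : D (((X 1 : S) ^ 2) ^ 2 * c)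
        = (X 1 : S) ^ 2 * ((X 1 : S) ^ 2 * D c + c * ((2 : ℕ) • D ((X 1 : S) ^ 2))) := by
      rw [Derivation.leibniz, Derivation.leibniz_pow]
      simp only [smul_eq_mul, nsmul_eq_mul, pow_one]
      push_cast
      ring
    rw [this]
    exact Dvd.intro _ rfl
  refine ⟨part1, ?_⟩
  -- the generator of J
  have hmem : (X 1 : S) ^ 2 ∈ J := hJ ▸ Ideal.subset_span rfl
  set e2 : J := ⟨(X 1 : S) ^ 2, hmem⟩ with he2
  set back : R →ₗ[R] J.Cotangent := LinearMap.toSpanSingleton R _ (J.toCotangent e2) with hback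
  have hsmul : ∀ (q : S) (y : J),
      (Ideal.Quotient.mk J q) • J.toCotangent y = J.toCotangent (q • y) := fun q y => rfl
  have hsurj : Function.Surjective back := by
    intro m
    obtain ⟨y, rfl⟩ := J.toCotangent_surjective m
    have hy : (y : S) ∈ Ideal.span {(X 1 : S) ^ 2} := hJ ▸ y.2
    rw [Ideal.mem_span_singleton] at hy
    obtain ⟨c, hc⟩ := hy
    refine ⟨Ideal.Quotient.mk J c, ?_⟩
    rw [hback, LinearMap.toSpanSingleton_apply, hsmul]
    congr 1
    ext
    simp [he2, hc, mul_comm]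
  have hinj : Function.Injective back := by
    rw [injective_iff_map_eq_zero]
    intro r hr
    obtain ⟨q, rfl⟩ := Ideal.Quotient.mk_surjective r
    rw [hback, LinearMap.toSpanSingleton_apply, hsmul, Ideal.toCotangent_eq_zero] at hr
    have hr' : q * (X 1 : S) ^ 2 ∈ J ^ 2 := hr
    rw [hJ, Ideal.span_singleton_pow, Ideal.mem_span_singleton] at hr'
    obtain ⟨c, hc⟩ := hr'
    have hq : q = (X 1 : S) ^ 2 * c := by
      have h4 : ((X 1 : S) ^ 2) ^ 2 * c = ((X 1 : S) ^ 2 * c) * (X 1 : S) ^ 2 := by ring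
      rw [h4] at hc
      exact mul_right_cancel₀ (pow_ne_zero 2 hX1) hc
    rw [Ideal.Quotient.eq_zero_iff_mem, hq, hJ]
    exact Ideal.mul_mem_right _ _ (Ideal.subset_span rfl)
  set cEq : J.Cotangent ≃ₗ[R] R := (LinearEquiv.ofBijective back ⟨hinj, hsurj⟩).symm with hcEq
  set ev : (J.Cotangent →ₗ[R] R) ≃ₗ[R] R :=
    (LinearEquiv.arrowCongr cEq (LinearEquiv.refl R R)).trans
      (LinearMap.ringLmapEquivSelf R R R) with hev
  have hevf : ∀ f : J.Cotangent →ₗ[R] R, ev f = f (J.toCotangent e2) := by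
    intro f
    rw [hev]
    simp only [LinearEquiv.trans_apply, LinearEquiv.arrowCongr_apply,
      LinearMap.ringLmapEquivSelf_apply, LinearEquiv.refl_apply, hcEq, LinearEquiv.symm_symm,
      LinearEquiv.ofBijective_apply, hback, LinearMap.toSpanSingleton_apply, one_smul]
  -- the image computation
  have hmap : Submodule.map (ev : (J.Cotangent →ₗ[R] R) →ₗ[R] R)
      (Submodule.span R (Set.range Φ)) = Ideal.span {Ideal.Quotient.mk J (X 1)} := by
    rw [Submodule.map_span]
    apply le_antisymm
    · rw [Submodule.span_le]
      rintro _ ⟨_, ⟨D, rfl⟩, rfl⟩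
      simp only [SetLike.mem_coe, LinearEquiv.coe_coe]
      rw [hevf, hΦ]
      rw [Ideal.mem_span_singleton]
      refine ⟨Ideal.Quotient.mk J ((2 : ℕ) • D (X 1)), ?_⟩
      rw [← map_mul]
      congr 1
      show D ((X 1 : S) ^ 2) = _
      rw [Derivation.leibniz_pow]
      simp only [smul_eq_mul, nsmul_eq_mul, pow_one]
      ring
    · rw [Ideal.span_le, Set.singleton_subset_iff]
      set D : Derivation F S S := (C (2⁻¹ : F) : S) • pderiv 1 with hD
      have key : ev (Φ D) = Ideal.Quotient.mk J (X 1) := by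
        rw [hevf, hΦ]
        congr 1
        show (C (2⁻¹ : F) : S) • pderiv 1 ((X 1 : S) ^ 2) = X 1
        rw [Derivation.leibniz_pow]
        simp only [pderiv_X_self, smul_eq_mul, nsmul_eq_mul, pow_one, mul_one]
        have h2 : ((2 : ℕ) : S) = C (2 : F) := by
          push_cast
          exact (map_ofNat C 2).symm
        rw [h2, ← mul_assoc, ← map_mul]
        norm_num
      rw [← key]
      exact Submodule.subset_span ⟨Φ D, ⟨D, rfl⟩, rfl⟩
  have coker1 := Submodule.Quotient.equiv (Submodule.span R (Set.range Φ))
    (Ideal.span {Ideal.Quotient.mk J (X 1)}) ev hmap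
  refine ⟨⟨coker1⟩, ?_⟩
  subst hJ
  exact ⟨(coker1.restrictScalars F).trans (ribbonQuot F).toLinearEquiv⟩



set_option synthInstance.maxHeartbeats 1000000 in
set_option maxHeartbeats 1000000 in
/-- Let `F` be a field of characteristic zero, `S = F[s, ε]`
(`s = X 0`, `ε = X 1`), `J = (ε²)` and `R = S/J`.  Every `F`-linear derivation `D` of `S`
maps `J²` into `J`, hence induces an `R`-linear map `φ_D : J/J² → R`,
`(j mod J²) ↦ (D j mod J)`.  The cokernel of the resulting map
`Der_F(S,S) ⊗_S R → Hom_R(J/J², R)` is isomorphic as an `R`-module to `R/(ε̄)`; in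
particular it is isomorphic as an `F`-vector space to the polynomial ring `F[s]`. -/
theorem cokernel_T1_ribbon (F : Type*) [Field F] [CharZero F]
    (J : Ideal (MvPolynomial (Fin 2) F))
    (hJ : J = Ideal.span {MvPolynomial.X 1 ^ 2})
    -- `Φ D` is the `R`-linear map `φ_D : J/J² → R` induced by the derivation `D`
    (Φ : Derivation F (MvPolynomial (Fin 2) F) (MvPolynomial (Fin 2) F) →
      (J.Cotangent →ₗ[MvPolynomial (Fin 2) F ⧸ J] MvPolynomial (Fin 2) F ⧸ J))
    (hΦ : ∀ (D : Derivation F (MvPolynomial (Fin 2) F) (MvPolynomial (Fin 2) F)) (x : J),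
      Φ D (J.toCotangent x) = Ideal.Quotient.mk J (D x)) :
    (∀ (D : Derivation F (MvPolynomial (Fin 2) F) (MvPolynomial (Fin 2) F)),
        ∀ x ∈ J ^ 2, D x ∈ J) ∧
    Nonempty
      (((J.Cotangent →ₗ[MvPolynomial (Fin 2) F ⧸ J] MvPolynomial (Fin 2) F ⧸ J) ⧸
          Submodule.span (MvPolynomial (Fin 2) F ⧸ J) (Set.range Φ)) ≃ₗ[MvPolynomial (Fin 2) F ⧸ J]
        ((MvPolynomial (Fin 2) F ⧸ J) ⧸
          Ideal.span {Ideal.Quotient.mk J (MvPolynomial.X 1)})) ∧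
    Nonempty
      (((J.Cotangent →ₗ[MvPolynomial (Fin 2) F ⧸ J] MvPolynomial (Fin 2) F ⧸ J) ⧸
          Submodule.span (MvPolynomial (Fin 2) F ⧸ J) (Set.range Φ)) ≃ₗ[F] Polynomial F) :=
  cokernel_T1_ribbon_aux F J hJ Φ hΦ
end

section
/- Let F be an algebraically closed field of characteristic zero and let n ≥ 3 be a natural number. Let Z ⊆ F^{n+1} be the set of coefficient vectors (a₀, …, a_n) such that the polynomial a_n x^n + ⋯ + a₁ x + a₀ ∈ F[x] has a root of multiplicity at least 3, i.e., is divisible by (x − r)³ for some r ∈ F. Then Z has codimension at least 2 in F^{n+1}: the Krull dimension of the quotient of the polynomial ring F[y₀, …, y_n] by the vanishing ideal of Z is at most n − 1. -/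
open Polynomial

/-!
A polynomial of degree at most `n` with a triple root `r` is `(X - r)³ q` with `deg q < n - 2`,
so `Z` lies in the image of a polynomial map `F^{n-1} → F^{n+1}`, `(r, q) ↦ coefficients of
(X - r)³ q`. The kernel of the comorphism `F[y₀, …, yₙ] → F[r, q₀, …, q_{n-3}]` therefore lies in
the vanishing ideal of `Z`, so algebraically independent elements of the coordinate ring of `Z`
lift to algebraically independent polynomials in `n - 1` variables: there are at most `n - 1` of
them. By Noether normalization the coordinate ring is integral over a polynomial ring in that many
variables, and an integral extension has Krull dimension at most that of the base.
-/

theorem ringKrullDim_le_of_isIntegral (R : Type*) {A : Type*} [CommRing R] [CommRing A] [Algebra R A]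
    [Algebra.IsIntegral R A] : ringKrullDim A ≤ ringKrullDim R :=
  Order.krullDim_le_of_strictMono (PrimeSpectrum.comap (algebraMap R A))
    fun _ _ h ↦ Ideal.IsIntegral.comap_lt_comap (R := R) h

theorem ringKrullDim_le_of_forall_not_algebraicIndependent {k A : Type*} [Field k] [CommRing A]
    [Algebra k A] [Algebra.FiniteType k A] {d : ℕ}
    (h : ∀ x : Fin (d + 1) → A, ¬ AlgebraicIndependent k x) : ringKrullDim A ≤ d := by
  nontriviality A
  obtain ⟨s, g, hinj, hint⟩ := exists_integral_inj_algHom_of_fg k A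
  have hs : s ≤ d := by
    by_contra! hds
    exact h _ (((MvPolynomial.algebraicIndependent_X _ k).map' hinj).comp _
      (Fin.castLE_injective hds))
  let := g.toRingHom.toAlgebra
  have : Algebra.IsIntegral (MvPolynomial (Fin s) k) A := ⟨hint⟩
  calc ringKrullDim A ≤ ringKrullDim (MvPolynomial (Fin s) k) := ringKrullDim_le_of_isIntegral _
    _ = s := by simp [MvPolynomial.ringKrullDim_of_isNoetherianRing]
    _ ≤ d := by exact_mod_cast hs

theorem MvPolynomial.not_algebraicIndependent_of_card_lt {K σ ι : Type*} [Field K] [Fintype σ]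
    [Fintype ι] (h : Fintype.card σ < Fintype.card ι) (x : ι → MvPolynomial σ K) :
    ¬ AlgebraicIndependent K x := by
  intro hx
  have hcard := hx.lift_cardinalMk_le_trdeg
  rw [MvPolynomial.trdeg_of_isDomain, Cardinal.lift_lift, Cardinal.mk_fintype,
    Cardinal.mk_fintype, Cardinal.lift_natCast, Cardinal.lift_natCast, Nat.cast_le] at hcard
  exact h.not_ge hcard

theorem AlgebraicIndependent.of_ker_le {k A B C ι : Type*} [CommRing k] [CommRing A] [CommRing B]
    [CommRing C] [Algebra k A] [Algebra k B] [Algebra k C] {f : A →ₐ[k] B} {g : A →ₐ[k] C}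
    (hfg : RingHom.ker f ≤ RingHom.ker g) {x : ι → A} (hx : AlgebraicIndependent k (g ∘ x)) :
    AlgebraicIndependent k (f ∘ x) := by
  rw [algebraicIndependent_iff] at hx ⊢
  intro p hp
  refine hx p ?_
  rw [Function.comp_def, ← MvPolynomial.comp_aeval_apply] at hp ⊢
  exact hfg hp

theorem MvPolynomial.ker_aeval_le_vanishingIdeal {K σ ι : Type*} [Field K]
    (Φ : ι → MvPolynomial σ K) {Z : Set (ι → K)}
    (hZ : Z ⊆ Set.range fun c i ↦ MvPolynomial.eval c (Φ i)) :
    RingHom.ker (MvPolynomial.aeval Φ) ≤ MvPolynomial.vanishingIdeal K Z := by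
  intro f hf
  rw [MvPolynomial.mem_vanishingIdeal_iff]
  rintro _ ha
  obtain ⟨c, rfl⟩ := hZ ha
  have := congrArg (MvPolynomial.aeval c) hf
  rw [MvPolynomial.comp_aeval_apply] at this
  simpa [MvPolynomial.coe_aeval_eq_eval] using this

namespace Polynomial

theorem exists_eq_X_sub_C_pow_mul_of_degree_lt {R : Type*} [CommRing R] [IsDomain R] {p : R[X]}
    {r : R} {k m : ℕ} (h : (X - C r) ^ k ∣ p) (hp : p.degree < ↑(m + k)) :
    ∃ q : R[X], q.degree < m ∧ p = (X - C r) ^ k * q := by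
  obtain ⟨q, rfl⟩ := h
  refine ⟨q, ?_, rfl⟩
  rw [degree_mul, degree_pow, degree_X_sub_C, nsmul_one, Nat.cast_add,
    add_comm (m : WithBot ℕ)] at hp
  exact (WithBot.add_lt_add_iff_left (WithBot.natCast_ne_bot k)).mp hp

theorem coeff_sum_fin_C_mul_X_pow {R : Type*} [Semiring R] {n : ℕ} (a : Fin n → R) (i : Fin n) :
    (∑ j : Fin n, C (a j) * X ^ (j : ℕ)).coeff i = a i := by
  simp [Fin.val_inj]

noncomputable def genericCubeMultiple (R : Type*) [CommRing R] (d : ℕ) :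
    (MvPolynomial (Option (Fin d)) R)[X] :=
  (X - C (MvPolynomial.X none)) ^ 3 * ∑ j : Fin d, C (MvPolynomial.X (some j)) * X ^ (j : ℕ)

theorem map_eval_genericCubeMultiple {R : Type*} [CommRing R] {d : ℕ} (r : R) {q : R[X]}
    (hq : q.degree < d) :
    (genericCubeMultiple R d).map (MvPolynomial.eval fun o ↦ o.elim r fun j ↦ q.coeff j) =
      (X - C r) ^ 3 * q := by
  simp only [genericCubeMultiple, Polynomial.map_mul, Polynomial.map_pow, Polynomial.map_sub,
    map_X, map_C, MvPolynomial.eval_X, Option.elim_none, Polynomial.map_sum, Option.elim_some]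
  rw [sum_fin (fun i a ↦ C a * X ^ i) (by simp) hq, sum_C_mul_X_pow_eq]

theorem tripleRootLocus_subset_range {R : Type*} [CommRing R] [IsDomain R] {n : ℕ} (hn : 3 ≤ n) :
    {a : Fin (n + 1) → R | ∃ r, (X - C r) ^ 3 ∣ ∑ i, C (a i) * X ^ (i : ℕ)} ⊆
      Set.range fun c (i : Fin (n + 1)) ↦
        MvPolynomial.eval c ((genericCubeMultiple R (n - 2)).coeff i) := by
  rintro a ⟨r, hr⟩
  obtain ⟨q, hq, hpq⟩ := exists_eq_X_sub_C_pow_mul_of_degree_lt (m := n - 2) hr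
    (by rw [show n - 2 + 3 = n + 1 by omega]; exact degree_sum_fin_lt a)
  refine ⟨fun o ↦ o.elim r fun j ↦ q.coeff j, ?_⟩
  ext i
  dsimp only
  rw [← coeff_map, map_eval_genericCubeMultiple r hq, ← hpq, coeff_sum_fin_C_mul_X_pow]

end Polynomial

theorem triple_root_locus_codim_two_general (F : Type*) [Field F]
    (n : ℕ) (hn : 3 ≤ n)
    (Z : Set (Fin (n + 1) → F))
    (hZ : Z = {a | ∃ r : F,
      (X - C r) ^ 3 ∣ ∑ i : Fin (n + 1), C (a i) * X ^ (i : ℕ)}) :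
    ringKrullDim
        (MvPolynomial (Fin (n + 1)) F ⧸ MvPolynomial.vanishingIdeal F Z) ≤ (n - 1 : ℕ) := by
  have hker : RingHom.ker (MvPolynomial.aeval fun i : Fin (n + 1) ↦
      (genericCubeMultiple F (n - 2)).coeff i) ≤
      RingHom.ker (Ideal.Quotient.mkₐ F (MvPolynomial.vanishingIdeal F Z)) :=
    (MvPolynomial.ker_aeval_le_vanishingIdeal _ (hZ ▸ tripleRootLocus_subset_range hn)).trans
      (Ideal.Quotient.mkₐ_ker F _).ge
  refine ringKrullDim_le_of_forall_not_algebraicIndependent (k := F) fun x hx ↦ ?_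
  obtain ⟨y, rfl⟩ := (Ideal.Quotient.mkₐ_surjective F _).comp_left x
  have hcard : Fintype.card (Option (Fin (n - 2))) < Fintype.card (Fin (n - 1 + 1)) := by
    simp only [Fintype.card_option, Fintype.card_fin]
    omega
  exact MvPolynomial.not_algebraicIndependent_of_card_lt hcard _ (hx.of_ker_le hker)

/-- Let `F` be an algebraically closed field of characteristic zero and
`n ≥ 3`.  Let `Z ⊆ F^{n+1}` be the set of coefficient vectors `(a₀, …, a_n)` such that
`a_n xⁿ + ⋯ + a₁ x + a₀` has a root of multiplicity at least `3` (i.e. is divisible by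
`(x − r)³` for some `r ∈ F`).  Then `Z` has codimension at least `2` in `F^{n+1}`: the
Krull dimension of `F[y₀, …, y_n]` modulo the vanishing ideal of `Z` is at most `n − 1`. -/
theorem triple_root_locus_codim_two (F : Type*) [Field F] [IsAlgClosed F] [CharZero F]
    (n : ℕ) (hn : 3 ≤ n)
    (Z : Set (Fin (n + 1) → F))
    (hZ : Z = {a | ∃ r : F,
      (X - C r) ^ 3 ∣ ∑ i : Fin (n + 1), C (a i) * X ^ (i : ℕ)}) :
    ringKrullDim
        (MvPolynomial (Fin (n + 1)) F ⧸ MvPolynomial.vanishingIdeal F Z) ≤ (n - 1 : ℕ) :=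
  triple_root_locus_codim_two_general F n hn Z hZ
end
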